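/- With the notation of the amalgamation Am(B,φ₀): for every b₁ ∈ B₁, the elements (b₁, 1) and (1, φ₀(b₁)) are equivalent in Am(B,φ₀) (each is below the other in the separative quotient / they have the same elements of Am(B,φ₀) below them). Consequently e₁ ↾ B₁ = e₂ ∘ φ₀, and the map f₁ : e₂[B] → e₁[B], f₁(1,b) = (b,1), is an isomorphism between two copies of B inside Am(B,φ₀) extending φ₀. -/
import Mathlib


open Set

variable {B : Type*}

/-- `S` is a complete subalgebra of the complete Boolean algebra `B`:
closed under arbitrary suprema and complements. -/
def IsCompleteSubalgebra [CompleteBooleanAlgebra B] (S : Set B) : Prop :=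
  (∀ T : Set B, T ⊆ S → sSup T ∈ S) ∧ (∀ a ∈ S, aᶜ ∈ S)

/-- The projection onto a complete subalgebra `S`:
`π(b) = inf {a ∈ S : b ≤ a}`. -/
def proj [CompleteBooleanAlgebra B] (S : Set B) (b : B) : B :=
  sInf {a ∈ S | b ≤ a}

/-- The amalgamation `Am(B,φ₀)` of `B` over an isomorphism `φ₀ : B₁ → B₂`:
the set of pairs `(b',b'') ∈ B × B` with `φ₀(π₁(b')) ⊓ π₂(b'') ≠ ⊥`,
with the product order. -/
def Amal [CompleteBooleanAlgebra B] (S₁ S₂ : Set B) (φ : B → B) :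
    Set (B × B) :=
  {c | φ (proj S₁ c.1) ⊓ proj S₂ c.2 ≠ ⊥}

/-- Compatibility in the amalgamation: a common extension inside `Am`. -/
def AmalCompat [CompleteBooleanAlgebra B] (Am : Set (B × B)) (c d : B × B) :
    Prop :=
  ∃ e ∈ Am, e ≤ c ∧ e ≤ d

/-- `φ` restricts to an isomorphism of `S₁` onto `S₂`. -/
def IsSubalgIso [CompleteBooleanAlgebra B] (S₁ S₂ : Set B) (φ : B → B) :
    Prop :=
  φ '' S₁ = S₂ ∧ (∀ a ∈ S₁, ∀ b ∈ S₁, (φ a ≤ φ b ↔ a ≤ b))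

section Helpers
variable [CompleteBooleanAlgebra B] {S : Set B} (hS : IsCompleteSubalgebra S)
include hS

lemma csub_bot : (⊥ : B) ∈ S := by
  have := hS.1 ∅ (by simp); simpa using this

lemma csub_top : (⊤ : B) ∈ S := by
  have := hS.2 ⊥ (csub_bot hS); simpa using this

lemma csub_sup {a b : B} (ha : a ∈ S) (hb : b ∈ S) : a ⊔ b ∈ S := by
  have := hS.1 {a, b} (by rintro x (rfl | rfl) <;> simpa)
  simpa using this

lemma csub_inf {a b : B} (ha : a ∈ S) (hb : b ∈ S) : a ⊓ b ∈ S := by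
  have := hS.2 _ (csub_sup hS (hS.2 a ha) (hS.2 b hb))
  simpa using this

lemma csub_sInf {T : Set B} (hT : T ⊆ S) : sInf T ∈ S := by
  have h1 : sSup (compl '' T) ∈ S := hS.1 _ (by rintro x ⟨a, ha, rfl⟩; exact hS.2 a (hT ha))
  have := hS.2 _ h1
  rwa [show (sSup (compl '' T))ᶜ = sInf T by rw [sSup_image]; simp [compl_iSup, sInf_eq_iInf]] at this

lemma proj_mem (b : B) : proj S b ∈ S := csub_sInf hS (fun a ha => ha.1)

omit hS in
lemma le_proj (b : B) : b ≤ proj S b := le_sInf (fun a ha => ha.2)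

omit hS in
lemma proj_le {a b : B} (ha : a ∈ S) (h : b ≤ a) : proj S b ≤ a := sInf_le ⟨ha, h⟩

omit hS in
lemma proj_of_mem {a : B} (ha : a ∈ S) : proj S a = a :=
  le_antisymm (proj_le ha le_rfl) (le_proj a)

omit hS in
lemma proj_mono {a b : B} (h : a ≤ b) : proj S a ≤ proj S b :=
  le_sInf (fun c hc => sInf_le ⟨hc.1, h.trans hc.2⟩)

lemma proj_inf {s : B} (hs : s ∈ S) (b : B) : proj S (b ⊓ s) = proj S b ⊓ s := by
  apply le_antisymm
  · exact le_inf (proj_mono inf_le_left) (proj_le hs inf_le_right)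
  · have h1 : b ≤ proj S (b ⊓ s) ⊔ sᶜ := by
      have : b ⊓ s ≤ proj S (b ⊓ s) := le_proj _
      calc b = b ⊓ s ⊔ b ⊓ sᶜ := by rw [← inf_sup_left]; simp
        _ ≤ proj S (b ⊓ s) ⊔ sᶜ := sup_le_sup this inf_le_right
    have h2 : proj S b ≤ proj S (b ⊓ s) ⊔ sᶜ :=
      proj_le (csub_sup hS (proj_mem hS _) (hS.2 s hs)) h1
    calc proj S b ⊓ s ≤ (proj S (b ⊓ s) ⊔ sᶜ) ⊓ s := inf_le_inf_right s h2
      _ = proj S (b ⊓ s) ⊓ s ⊔ sᶜ ⊓ s := by rw [inf_sup_right]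
      _ ≤ proj S (b ⊓ s) := by simp

end Helpers

section Phi
variable [CompleteBooleanAlgebra B] {S₁ S₂ : Set B} {φ : B → B}
  (hS₁ : IsCompleteSubalgebra S₁) (hS₂ : IsCompleteSubalgebra S₂)
  (hφ : IsSubalgIso S₁ S₂ φ)
include hφ

lemma phi_mem {a : B} (ha : a ∈ S₁) : φ a ∈ S₂ := hφ.1 ▸ ⟨a, ha, rfl⟩

include hS₁ hS₂ in
lemma phi_top : φ ⊤ = ⊤ := by
  obtain ⟨c, hc, hce⟩ : (⊤ : B) ∈ φ '' S₁ := hφ.1.symm ▸ csub_top hS₂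
  exact le_antisymm le_top (hce ▸ (hφ.2 c hc ⊤ (csub_top hS₁)).2 le_top)

include hS₁ hS₂ in
lemma phi_bot : φ ⊥ = ⊥ := by
  obtain ⟨c, hc, hce⟩ : (⊥ : B) ∈ φ '' S₁ := hφ.1.symm ▸ csub_bot hS₂
  exact le_antisymm (hce ▸ (hφ.2 ⊥ (csub_bot hS₁) c hc).2 bot_le) bot_le

include hS₁ hS₂ in
lemma phi_ne_bot {a : B} (ha : a ∈ S₁) (h : a ≠ ⊥) : φ a ≠ ⊥ := fun he => by
  have := (hφ.2 a ha ⊥ (csub_bot hS₁)).1 (by rw [he, phi_bot hS₁ hS₂ hφ])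
  exact h (le_bot_iff.1 this)

omit hS₂ in
include hS₁ in
lemma phi_mono {a b : B} (ha : a ∈ S₁) (hb : b ∈ S₁) (h : a ≤ b) : φ a ≤ φ b :=
  (hφ.2 a ha b hb).2 h

include hS₁ hS₂ in
lemma phi_inf {a b : B} (ha : a ∈ S₁) (hb : b ∈ S₁) : φ (a ⊓ b) = φ a ⊓ φ b := by
  have hab : a ⊓ b ∈ S₁ := csub_inf hS₁ ha hb
  apply le_antisymm
  · exact le_inf (phi_mono hS₁ hφ hab ha inf_le_left)
      (phi_mono hS₁ hφ hab hb inf_le_right)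
  · obtain ⟨c, hc, hce⟩ : φ a ⊓ φ b ∈ φ '' S₁ :=
      hφ.1.symm ▸ csub_inf hS₂ (phi_mem hφ ha) (phi_mem hφ hb)
    have hca : c ≤ a := (hφ.2 c hc a ha).1 (hce.le.trans inf_le_left)
    have hcb : c ≤ b := (hφ.2 c hc b hb).1 (hce.le.trans inf_le_right)
    exact hce ▸ phi_mono hS₁ hφ hc hab (le_inf hca hcb)

end Phi

/-- In the amalgamation `Am(B,φ₀)`, for every `b₁ ∈ B₁` the conditions
`(b₁,1)` and `(1,φ₀(b₁))` are equivalent (they are compatible with exactly the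
same conditions, i.e. equal in the separative quotient); consequently
`e₁ ↾ B₁ = e₂ ∘ φ₀` up to equivalence, and the map `f₁(1,b) = (b,1)` is an
isomorphism between the two copies `e₂[B]` and `e₁[B]` of `B` inside
`Am(B,φ₀)` extending `φ₀`. -/
theorem amalgamation_equivalent_copies
    [CompleteBooleanAlgebra B] (S₁ S₂ : Set B)
    (hS₁ : IsCompleteSubalgebra S₁) (hS₂ : IsCompleteSubalgebra S₂)
    (φ : B → B) (hφ : IsSubalgIso S₁ S₂ φ) :
    let Am := Amal S₁ S₂ φ
    -- the two conditions are equivalent in the separative quotient: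
    (∀ b₁ ∈ S₁, b₁ ≠ ⊥ →
      (∀ q ∈ Am, q ≤ ((b₁, ⊤) : B × B) → AmalCompat Am q (⊤, φ b₁)) ∧
      (∀ q ∈ Am, q ≤ ((⊤, φ b₁) : B × B) → AmalCompat Am q (b₁, ⊤)) ∧
      (∀ q ∈ Am, (AmalCompat Am q (b₁, ⊤) ↔ AmalCompat Am q (⊤, φ b₁)))) ∧
    -- `f₁(1,b) = (b,1)` is an isomorphism between the two copies of `B`,
    -- i.e. it preserves compatibility (hence the separative structure):
    (∀ b b' : B, b ≠ ⊥ → b' ≠ ⊥ →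
      (AmalCompat Am ((⊤, b) : B × B) (⊤, b') ↔
        AmalCompat Am ((b, ⊤) : B × B) (b', ⊤))) := by
  intro Am
  constructor
  · intro b₁ hb₁ _
    have hφb₁ : φ b₁ ∈ S₂ := phi_mem hφ hb₁
    have h1 : ∀ q ∈ Am, q ≤ ((b₁, ⊤) : B × B) → AmalCompat Am q (⊤, φ b₁) := by
      intro q hq hle
      refine ⟨(q.1, q.2 ⊓ φ b₁), ?_, Prod.le_def.mpr ⟨le_rfl, inf_le_left⟩,
        Prod.le_def.mpr ⟨le_top, inf_le_right⟩⟩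
      have hπ : proj S₁ q.1 ≤ b₁ := proj_le hb₁ (Prod.le_def.mp hle).1
      have hφπ : φ (proj S₁ q.1) ≤ φ b₁ := phi_mono hS₁ hφ (proj_mem hS₁ _) hb₁ hπ
      show φ (proj S₁ q.1) ⊓ proj S₂ (q.2 ⊓ φ b₁) ≠ ⊥
      rw [proj_inf hS₂ hφb₁, inf_comm (proj S₂ q.2) (φ b₁), ← inf_assoc,
        inf_eq_left.2 hφπ]
      exact hq
    have h2 : ∀ q ∈ Am, q ≤ ((⊤, φ b₁) : B × B) → AmalCompat Am q (b₁, ⊤) := by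
      intro q hq hle
      refine ⟨(q.1 ⊓ b₁, q.2), ?_, Prod.le_def.mpr ⟨inf_le_left, le_rfl⟩,
        Prod.le_def.mpr ⟨inf_le_right, le_top⟩⟩
      have hπ2 : proj S₂ q.2 ≤ φ b₁ := proj_le hφb₁ (Prod.le_def.mp hle).2
      show φ (proj S₁ (q.1 ⊓ b₁)) ⊓ proj S₂ q.2 ≠ ⊥
      rw [proj_inf hS₁ hb₁, phi_inf hS₁ hS₂ hφ (proj_mem hS₁ _) hb₁, inf_assoc,
        inf_eq_right.2 hπ2]
      exact hq
    refine ⟨h1, h2, fun q hq => ⟨?_, ?_⟩⟩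
    · rintro ⟨e, he, heq, hel⟩
      obtain ⟨e', he', h1', h2'⟩ := h1 e he hel
      exact ⟨e', he', h1'.trans heq, h2'⟩
    · rintro ⟨e, he, heq, hel⟩
      obtain ⟨e', he', h1', h2'⟩ := h2 e he hel
      exact ⟨e', he', h1'.trans heq, h2'⟩
  · intro b b' hb hb'
    constructor
    · rintro ⟨e, he, h1, h2⟩
      have he2 : e.2 ≠ ⊥ := fun h => he (show φ (proj S₁ e.1) ⊓ proj S₂ e.2 = ⊥ by
        rw [h, proj_of_mem (csub_bot hS₂), inf_bot_eq])
      have hne : b ⊓ b' ≠ ⊥ := fun h =>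
        he2 (le_bot_iff.1 (h ▸ le_inf (Prod.le_def.mp h1).2 (Prod.le_def.mp h2).2))
      refine ⟨(b ⊓ b', ⊤), ?_, Prod.le_def.mpr ⟨inf_le_left, le_top⟩,
        Prod.le_def.mpr ⟨inf_le_right, le_top⟩⟩
      show φ (proj S₁ (b ⊓ b')) ⊓ proj S₂ ⊤ ≠ ⊥
      rw [proj_of_mem (csub_top hS₂), inf_top_eq]
      exact phi_ne_bot hS₁ hS₂ hφ (proj_mem hS₁ _)
        (fun h => hne (le_bot_iff.1 (h ▸ le_proj (b ⊓ b'))))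
    · rintro ⟨e, he, h1, h2⟩
      have he1 : e.1 ≠ ⊥ := fun h => he (show φ (proj S₁ e.1) ⊓ proj S₂ e.2 = ⊥ by
        rw [h, proj_of_mem (csub_bot hS₁), phi_bot hS₁ hS₂ hφ, bot_inf_eq])
      have hne : b ⊓ b' ≠ ⊥ := fun h =>
        he1 (le_bot_iff.1 (h ▸ le_inf (Prod.le_def.mp h1).1 (Prod.le_def.mp h2).1))
      refine ⟨(⊤, b ⊓ b'), ?_, Prod.le_def.mpr ⟨le_top, inf_le_left⟩,
        Prod.le_def.mpr ⟨le_top, inf_le_right⟩⟩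
      show φ (proj S₁ ⊤) ⊓ proj S₂ (b ⊓ b') ≠ ⊥
      rw [proj_of_mem (csub_top hS₁), phi_top hS₁ hS₂ hφ, top_inf_eq]
      exact fun h => hne (le_bot_iff.1 (h ▸ le_proj (b ⊓ b')))
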